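/- There exist a constant C > 0 and an integer N ≥ 1 such that for all n ≥ N (in particular λ_n > λ), ∫₀¹ ξ̃_n(x)² dx ≥ C; i.e. the L²(0,1) norms of the functions ξ̃_n are bounded below away from zero. -/

import Mathlib

open MeasureTheory Real Set

/-- The Bessel function of the first kind of order `ν ≥ 0`, defined by its power series
`J_ν(x) = ∑_{m≥0} (-1)^m / (m! Γ(m+ν+1)) (x/2)^(2m+ν)`. -/
noncomputable def besselJ (ν : ℝ) (x : ℝ) : ℝ :=
  ∑' m : ℕ, ((-1 : ℝ) ^ m / ((m.factorial : ℝ) * Real.Gamma ((m : ℝ) + ν + 1))) *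
    (x / 2) ^ (2 * (m : ℝ) + ν)

/-! The substitution `t = a x^κ`, `a = √(λ_n - λ) / κ`, turns `∫₀¹ ξ̃_n²` into
`(a J_ν'(j_n))⁻² ∫₀^a 2t J_ν(t)² dt`. By Bessel's equation the energy
`E(t) = (t J_ν'(t))² + (t² - ν²) J_ν(t)²` has derivative `2t J_ν(t)²`, and at a zero `j_k` it equals
`(j_k J_ν'(j_k))²`, which lies between `c₁² j_k` and `c₂² j_k`. Consecutive zeros are about `π`
apart, so `j_{n-1} ≤ a ≤ j_n`; hence the integral is at least `E(j_{n-1}) - E(j_1) ≥ c₁² j_n / 4`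
for large `n`, while `(a J_ν'(j_n))² ≤ c₂² j_n`. -/

open scoped Nat

noncomputable def powerSum (b : ℕ → ℝ) (y : ℝ) : ℝ := ∑' m, b m * y ^ m

def derivCoeff (b : ℕ → ℝ) (m : ℕ) : ℝ := (m + 1) * b (m + 1)

section PowerSeries

variable {b : ℕ → ℝ} {A : ℝ}

lemma summable_mul_pow_of_abs_le (hb : ∀ m, |b m| ≤ A / m !) (y : ℝ) :
    Summable fun m => b m * y ^ m := by
  refine .of_norm_bounded ((summable_pow_div_factorial |y|).mul_left A) fun m => ?_
  rw [norm_mul, norm_pow, Real.norm_eq_abs, Real.norm_eq_abs]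
  calc |b m| * |y| ^ m ≤ A / m ! * |y| ^ m := by gcongr; exact hb m
    _ = A * (|y| ^ m / m !) := by ring

lemma abs_derivCoeff_le (hb : ∀ m, |b m| ≤ A / m !) (m : ℕ) : |derivCoeff b m| ≤ A / m ! := by
  have hm : (0 : ℝ) < m + 1 := by positivity
  calc |derivCoeff b m| = (m + 1) * |b (m + 1)| := by
        rw [derivCoeff, abs_mul, abs_of_pos hm]
    _ ≤ (m + 1) * (A / (m + 1)!) := by gcongr; exact hb _
    _ = A / m ! := by rw [Nat.factorial_succ]; push_cast; field_simp

lemma hasSum_derivCoeff_mul_pow (hb : ∀ m, |b m| ≤ A / m !) (y : ℝ) :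
    HasSum (fun m => b m * (m * y ^ (m - 1))) (powerSum (derivCoeff b) y) := by
  rw [← hasSum_nat_add_iff' 1]
  simpa [powerSum, derivCoeff, mul_comm, mul_left_comm, mul_assoc] using
    (summable_mul_pow_of_abs_le (abs_derivCoeff_le hb) y).hasSum

lemma hasDerivAt_powerSum (hb : ∀ m, |b m| ≤ A / m !) (y : ℝ) :
    HasDerivAt (powerSum b) (powerSum (derivCoeff b) y) y := by
  set R := |y| + 1
  have hu : Summable fun m : ℕ => A / m ! * (m * R ^ (m - 1)) := by
    rw [← summable_nat_add_iff 1]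
    refine ((summable_pow_div_factorial R).mul_left A).congr fun m => ?_
    simp only [Nat.factorial_succ, Nat.add_sub_cancel]
    push_cast
    field_simp
  have hy : y ∈ Ioo (-R) R := abs_lt.mp (lt_add_one |y|)
  rw [← (hasSum_derivCoeff_mul_pow hb y).tsum_eq]
  refine hasDerivAt_tsum_of_isPreconnected hu isOpen_Ioo isPreconnected_Ioo
    (fun m z _ => (hasDerivAt_pow m z).const_mul (b m)) (fun m z hz => ?_) hy
    (summable_mul_pow_of_abs_le hb y) hy
  rw [norm_mul, norm_mul, norm_pow, Real.norm_eq_abs, Real.norm_eq_abs, Real.norm_eq_abs,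
    Nat.abs_cast]
  have hz : |z| ≤ R := (abs_lt.mpr hz).le
  gcongr
  · exact (abs_nonneg _).trans (hb m)
  · exact hb m

lemma continuous_powerSum (hb : ∀ m, |b m| ≤ A / m !) : Continuous (powerSum b) :=
  continuous_iff_continuousAt.2 fun y => (hasDerivAt_powerSum hb y).continuousAt

lemma hasDerivAt_powerSum_comp_sq (hb : ∀ m, |b m| ≤ A / m !) (x : ℝ) :
    HasDerivAt (fun x => powerSum b (x ^ 2 / 4)) (powerSum (derivCoeff b) (x ^ 2 / 4) * (x / 2))
      x := by
  refine ((hasDerivAt_powerSum hb (x ^ 2 / 4)).comp x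
    ((hasDerivAt_pow 2 x).div_const 4)).congr_deriv ?_
  push_cast
  ring

lemma powerSum_ode {ν : ℝ} (hb : ∀ m, |b m| ≤ A / m !)
    (hrec : ∀ m : ℕ, (m + ν + 1) * derivCoeff b m = -b m) (y : ℝ) :
    y * powerSum (derivCoeff (derivCoeff b)) y + (ν + 1) * powerSum (derivCoeff b) y
      + powerSum b y = 0 := by
  have hb' := abs_derivCoeff_le hb
  have h₁ : HasSum (fun m : ℕ => m * derivCoeff b m * y ^ m)
      (y * powerSum (derivCoeff (derivCoeff b)) y) := by
    rw [← hasSum_nat_add_iff' 1]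
    simpa [powerSum, derivCoeff, pow_succ, mul_comm, mul_left_comm, mul_assoc] using
      ((summable_mul_pow_of_abs_le (abs_derivCoeff_le hb') y).hasSum).mul_left y
  have h₂ := ((summable_mul_pow_of_abs_le hb' y).hasSum).mul_left (ν + 1)
  have h₃ := (summable_mul_pow_of_abs_le hb y).hasSum
  refine ((h₁.add h₂).add h₃).unique ?_
  convert hasSum_zero with m
  linear_combination y ^ m * hrec m

end PowerSeries

lemma hasDerivAt_half_rpow {ν x : ℝ} (hx : 0 < x) :
    HasDerivAt (fun x => (x / 2) ^ ν) ((x / 2) ^ ν * (ν / x)) x := by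
  have hx2 : 0 < x / 2 := by positivity
  refine ((hasDerivAt_rpow_const (p := ν) (Or.inl hx2.ne')).comp x
    ((hasDerivAt_id x).div_const 2)).congr_deriv ?_
  rw [rpow_sub_one hx2.ne']
  field_simp

noncomputable def besselCoeff (ν : ℝ) (m : ℕ) : ℝ := (-1) ^ m / (m ! * Gamma (m + ν + 1))

lemma Gamma_add_one_le_Gamma_natCast_add {ν : ℝ} (hν : 0 ≤ ν) (m : ℕ) :
    Gamma (ν + 1) ≤ Gamma (m + ν + 1) := by
  induction m with
  | zero => simp
  | succ k ih =>
    have hk : (1 : ℝ) ≤ k + ν + 1 := by linarith [k.cast_nonneg (α := ℝ)]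
    calc Gamma (ν + 1) ≤ Gamma (k + ν + 1) := ih
      _ ≤ (k + ν + 1) * Gamma (k + ν + 1) :=
        le_mul_of_one_le_left (Gamma_pos_of_pos (by linarith)).le hk
      _ = Gamma ((k + 1 : ℕ) + ν + 1) := by
        rw [← Gamma_add_one (by linarith)]; push_cast; ring_nf

lemma abs_besselCoeff_le {ν : ℝ} (hν : 0 ≤ ν) (m : ℕ) :
    |besselCoeff ν m| ≤ (Gamma (ν + 1))⁻¹ / m ! := by
  have hΓ := Gamma_pos_of_pos (by linarith : 0 < ν + 1)
  have hΓm := Gamma_pos_of_pos (by positivity : (0 : ℝ) < m + ν + 1)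
  calc |besselCoeff ν m| = 1 / (m ! * Gamma (m + ν + 1)) := by
        rw [besselCoeff, abs_div, abs_pow, abs_neg, abs_one, one_pow, abs_of_pos (by positivity)]
    _ ≤ 1 / (m ! * Gamma (ν + 1)) := by
        gcongr; exact Gamma_add_one_le_Gamma_natCast_add hν m
    _ = (Gamma (ν + 1))⁻¹ / m ! := by field_simp

lemma besselCoeff_rec {ν : ℝ} (hν : 0 ≤ ν) (m : ℕ) :
    (m + ν + 1) * derivCoeff (besselCoeff ν) m = -besselCoeff ν m := by
  have hpos : (0 : ℝ) < m + ν + 1 := by positivity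
  have hΓ := Gamma_pos_of_pos hpos
  rw [derivCoeff, besselCoeff, besselCoeff, Nat.factorial_succ, pow_succ]
  push_cast
  rw [show (m : ℝ) + 1 + ν + 1 = (m + ν + 1) + 1 by ring, Gamma_add_one hpos.ne']
  field_simp

lemma besselJ_eq_rpow_mul_powerSum {ν x : ℝ} (hν : 0 < ν) (hx : 0 ≤ x) :
    besselJ ν x = (x / 2) ^ ν * powerSum (besselCoeff ν) (x ^ 2 / 4) := by
  rw [besselJ, powerSum, ← tsum_mul_left]
  congr 1 with m
  rw [rpow_add' (by positivity) (by positivity),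
    show (2 : ℝ) * m = ((2 * m : ℕ) : ℝ) by push_cast; ring, rpow_natCast, pow_mul, besselCoeff]
  ring

lemma continuousOn_besselJ {ν : ℝ} (hν : 0 < ν) : ContinuousOn (besselJ ν) (Ici 0) := by
  refine (((continuous_rpow_const hν.le).comp (continuous_id.div_const 2)).mul
    ((continuous_powerSum (abs_besselCoeff_le hν.le)).comp
      ((continuous_pow 2).div_const 4))).continuousOn.congr fun x hx => ?_
  exact besselJ_eq_rpow_mul_powerSum hν hx

/-- `x * J_ν'(x)`, written through the power series so that it can be differentiated again. -/
noncomputable def xDerivBesselJ (ν x : ℝ) : ℝ :=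
  (x / 2) ^ ν * (ν * powerSum (besselCoeff ν) (x ^ 2 / 4)
    + x ^ 2 / 2 * powerSum (derivCoeff (besselCoeff ν)) (x ^ 2 / 4))

lemma hasDerivAt_besselJ {ν x : ℝ} (hν : 0 < ν) (hx : 0 < x) :
    HasDerivAt (besselJ ν) (xDerivBesselJ ν x / x) x := by
  have hJ : besselJ ν =ᶠ[nhds x] fun x => (x / 2) ^ ν * powerSum (besselCoeff ν) (x ^ 2 / 4) :=
    Filter.eventually_of_mem (Ioi_mem_nhds hx) fun _ hy => besselJ_eq_rpow_mul_powerSum hν hy.le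
  refine ((hasDerivAt_half_rpow hx).mul (hasDerivAt_powerSum_comp_sq
    (abs_besselCoeff_le hν.le) x)).congr_of_eventuallyEq hJ |>.congr_deriv ?_
  rw [xDerivBesselJ]
  field_simp

lemma hasDerivAt_xDerivBesselJ {ν x : ℝ} (hν : 0 < ν) (hx : 0 < x) :
    HasDerivAt (xDerivBesselJ ν) ((ν ^ 2 - x ^ 2) / x * besselJ ν x) x := by
  have hb := abs_besselCoeff_le hν.le
  have hF := hasDerivAt_powerSum_comp_sq hb x
  have hF' := hasDerivAt_powerSum_comp_sq (abs_derivCoeff_le hb) x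
  have hsq : HasDerivAt (fun x : ℝ => x ^ 2 / 2) x x := by
    simpa using (hasDerivAt_pow 2 x).div_const 2
  refine ((hasDerivAt_half_rpow hx).mul ((hF.const_mul ν).add (hsq.mul hF'))).congr_deriv ?_
  rw [besselJ_eq_rpow_mul_powerSum hν hx.le]
  have hode := powerSum_ode hb (besselCoeff_rec hν.le) (x ^ 2 / 4)
  set F := powerSum (besselCoeff ν) (x ^ 2 / 4)
  set F' := powerSum (derivCoeff (besselCoeff ν)) (x ^ 2 / 4)
  set F'' := powerSum (derivCoeff (derivCoeff (besselCoeff ν))) (x ^ 2 / 4)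
  simp only [Pi.add_apply, Pi.mul_apply]
  calc _ = (x / 2) ^ ν / x * (ν ^ 2 * F + x ^ 2 * (x ^ 2 / 4 * F'' + (ν + 1) * F')) := by
        field_simp; ring
    _ = _ := by rw [eq_neg_of_add_eq_zero_left hode]; ring

noncomputable def besselEnergy (ν x : ℝ) : ℝ :=
  xDerivBesselJ ν x ^ 2 + (x ^ 2 - ν ^ 2) * besselJ ν x ^ 2

lemma hasDerivAt_besselEnergy {ν x : ℝ} (hν : 0 < ν) (hx : 0 < x) :
    HasDerivAt (besselEnergy ν) (2 * x * besselJ ν x ^ 2) x := by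
  refine (((hasDerivAt_xDerivBesselJ hν hx).fun_pow 2).add
    (((hasDerivAt_pow 2 x).sub_const (ν ^ 2)).mul
      ((hasDerivAt_besselJ hν hx).fun_pow 2))).congr_deriv ?_
  field_simp
  ring

lemma besselEnergy_eq_of_besselJ_eq_zero {ν x : ℝ} (hν : 0 < ν) (hx : 0 < x)
    (h : besselJ ν x = 0) : besselEnergy ν x = (x * deriv (besselJ ν) x) ^ 2 := by
  rw [besselEnergy, h, (hasDerivAt_besselJ hν hx).deriv, mul_div_cancel₀ _ hx.ne']
  ring

lemma intervalIntegrable_two_mul_besselJ_sq {ν p q : ℝ} (hν : 0 < ν) (hp : 0 ≤ p) (hq : 0 ≤ q) :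
    IntervalIntegrable (fun t => 2 * t * besselJ ν t ^ 2) volume p q :=
  ContinuousOn.intervalIntegrable <| (continuousOn_const.mul continuousOn_id).mul
    ((continuousOn_besselJ hν).pow 2 |>.mono fun _ ht => le_trans (le_min hp hq) ht.1)

lemma integral_two_mul_besselJ_sq {ν p q : ℝ} (hν : 0 < ν) (hp : 0 < p) (hpq : p ≤ q) :
    ∫ t in p..q, 2 * t * besselJ ν t ^ 2 = besselEnergy ν q - besselEnergy ν p :=
  intervalIntegral.integral_eq_sub_of_hasDerivAt
    (fun _ ht => hasDerivAt_besselEnergy hν (hp.trans_le (uIcc_of_le hpq ▸ ht).1))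
    (intervalIntegrable_two_mul_besselJ_sq hν hp.le (hp.le.trans hpq))

lemma sq_mul_deriv_besselJ_sub_le_integral {ν p q a : ℝ} (hν : 0 < ν) (hp : 0 < p) (hpq : p ≤ q)
    (hqa : q ≤ a) (hJp : besselJ ν p = 0) (hJq : besselJ ν q = 0) :
    (q * deriv (besselJ ν) q) ^ 2 - (p * deriv (besselJ ν) p) ^ 2
      ≤ ∫ t in (0 : ℝ)..a, 2 * t * besselJ ν t ^ 2 := by
  have hq := hp.trans_le hpq
  rw [← besselEnergy_eq_of_besselJ_eq_zero hν hq hJq,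
    ← besselEnergy_eq_of_besselJ_eq_zero hν hp hJp,
    ← integral_two_mul_besselJ_sq hν hp hpq]
  refine intervalIntegral.integral_mono_interval hp.le hpq hqa ?_
    (intervalIntegrable_two_mul_besselJ_sq hν le_rfl (hq.le.trans hqa))
  filter_upwards [ae_restrict_mem measurableSet_Ioc] with t ht
  have := ht.1.le
  positivity

lemma sq_rpow_mul_comp_rpow_eq (f : ℝ → ℝ) {κ a x : ℝ} (hκ : 1 / 2 < κ) (ha : 0 < a)
    (hx : 0 ≤ x) :
    (√(2 * κ) * x ^ (κ - 1 / 2) * f (a * x ^ κ)) ^ 2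
      = 2 * (a * x ^ κ) * f (a * x ^ κ) ^ 2 / a ^ 2 * (a * (κ * x ^ (κ - 1))) := by
  have hκ0 : 0 < κ := by linarith
  rcases hx.eq_or_lt with rfl | hx
  · rw [zero_rpow hκ0.ne', zero_rpow (by linarith)]
    ring
  · rw [mul_pow, mul_pow, sq_sqrt (by positivity), ← rpow_natCast, ← rpow_mul hx.le,
      show (κ - 1 / 2) * ((2 : ℕ) : ℝ) = κ + (κ - 1) by push_cast; ring, rpow_add hx]
    field_simp

lemma integral_sq_rpow_mul_comp_rpow {f : ℝ → ℝ} (hf : ContinuousOn f (Ici 0)) {κ a : ℝ}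
    (hκ : 1 / 2 < κ) (ha : 0 < a) :
    ∫ x in (0 : ℝ)..1, (√(2 * κ) * x ^ (κ - 1 / 2) * f (a * x ^ κ)) ^ 2
      = (∫ t in (0 : ℝ)..a, 2 * t * f t ^ 2) / a ^ 2 := by
  set u : ℝ → ℝ := fun x => a * x ^ κ
  set g : ℝ → ℝ := fun t => 2 * t * f t ^ 2 / a ^ 2
  have hκ0 : 0 < κ := by linarith
  have hu : Continuous u := (continuous_rpow_const hκ0.le).const_mul a
  have hu_nonneg : MapsTo u (Ici 0) (Ici 0) := fun x hx => mul_nonneg ha.le (rpow_nonneg hx κ)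
  have hg : ContinuousOn g (Ici 0) :=
    (((continuousOn_const.mul continuousOn_id).mul (hf.pow 2)).div_const _)
  have hsub : uIcc (0 : ℝ) 1 ⊆ Ici 0 := by rw [uIcc_of_le zero_le_one]; exact Icc_subset_Ici_self
  have heq : EqOn (fun x => (√(2 * κ) * x ^ (κ - 1 / 2) * f (a * x ^ κ)) ^ 2)
      (fun x => (g ∘ u) x * (a * (κ * x ^ (κ - 1)))) (uIcc 0 1) :=
    fun x hx => sq_rpow_mul_comp_rpow_eq f hκ ha (hsub hx)
  have hcont : ContinuousOn (fun x => (√(2 * κ) * x ^ (κ - 1 / 2) * f (a * x ^ κ)) ^ 2)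
      (uIcc 0 1) :=
    ((continuous_const.mul (continuous_rpow_const (by linarith))).continuousOn.mul
      (hf.comp hu.continuousOn (hu_nonneg.mono_left hsub))).pow 2
  have hcov := intervalIntegral.integral_comp_mul_deriv''' (a := 0) (b := 1) (g := g)
    hu.continuousOn
    (fun x hx => by
      have hx : 0 < x := by simpa using hx.1
      exact ((hasDerivAt_rpow_const (p := κ) (Or.inl hx.ne')).const_mul a).hasDerivWithinAt)
    (hg.mono (hu_nonneg.mono_left (Ioo_subset_Icc_self.trans hsub)).image_subset)
    ((hg.mono (hu_nonneg.mono_left hsub).image_subset).integrableOn_compact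
      (isCompact_uIcc.image hu))
    ((hcont.integrableOn_compact isCompact_uIcc).congr_fun heq measurableSet_uIcc)
  rw [intervalIntegral.integral_congr heq, hcov, ← intervalIntegral.integral_div]
  simp only [u, g, zero_rpow hκ0.ne', one_rpow, mul_zero, mul_one]

lemma energy_sub_div_le_integral_sq {ν κ p q a d : ℝ} (hν : 0 < ν) (hκ : 1 / 2 < κ) (hp : 0 < p)
    (hpq : p ≤ q) (hqa : q ≤ a) (hJp : besselJ ν p = 0) (hJq : besselJ ν q = 0) :
    ((q * deriv (besselJ ν) q) ^ 2 - (p * deriv (besselJ ν) p) ^ 2) / (a * d) ^ 2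
      ≤ ∫ x in (0 : ℝ)..1, (√(2 * κ) * x ^ (κ - 1 / 2) * besselJ ν (a * x ^ κ) / d) ^ 2 := by
  simp_rw [div_pow]
  rw [intervalIntegral.integral_div, integral_sq_rpow_mul_comp_rpow (continuousOn_besselJ hν) hκ
    (hp.trans_le (hpq.trans hqa)), div_div, ← mul_pow]
  exact div_le_div_of_nonneg_right (sq_mul_deriv_besselJ_sub_le_integral hν hp hpq hqa hJp hJq)
    (sq_nonneg _)

lemma sq_mul_le_of_abs_le_div_sqrt {c v w : ℝ} (hw : 0 < w) (h : |v| ≤ c / √w) :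
    (w * v) ^ 2 ≤ c ^ 2 * w := by
  have := pow_le_pow_left₀ (abs_nonneg v) h 2
  rw [div_pow, sq_sqrt hw.le, sq_abs, le_div_iff₀ hw] at this
  nlinarith

lemma le_sq_mul_of_div_sqrt_le {c v w : ℝ} (hc : 0 ≤ c) (hw : 0 < w) (h : c / √w ≤ |v|) :
    c ^ 2 * w ≤ (w * v) ^ 2 := by
  have := pow_le_pow_left₀ (by positivity) h 2
  rw [div_pow, sq_sqrt hw.le, sq_abs, div_le_iff₀ hw] at this
  nlinarith

lemma eventually_abs_sub_sub_pi_le {j : ℕ → ℝ} {c C ε : ℝ} (hε : 0 < ε)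
    (h : ∀ n : ℕ, 1 ≤ n → |j n - π * (n + c)| ≤ C / n) :
    ∀ᶠ n in Filter.atTop, |j (n + 1) - j n - π| ≤ ε := by
  have hC : ∀ᶠ n : ℕ in Filter.atTop, C / n < ε / 2 :=
    (tendsto_const_div_atTop_nhds_zero_nat C).eventually_lt_const (half_pos hε)
  filter_upwards [hC, (Filter.tendsto_add_atTop_nat 1).eventually hC,
    Filter.eventually_ge_atTop 1] with n hn hn1 h1
  have e : j (n + 1) - j n - π = (j (n + 1) - π * ((n + 1 : ℕ) + c)) - (j n - π * (n + c)) := by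
    push_cast; ring
  rw [e]
  linarith [abs_sub (j (n + 1) - π * ((n + 1 : ℕ) + c)) (j n - π * (n + c)), h n h1,
    h (n + 1) (by omega)]

lemma le_sqrt_sub_div_and_le {κ lam q r : ℝ} (hκ : 0 < κ) (hlam : 0 ≤ lam) (hq : 0 ≤ q)
    (hr : 0 ≤ r) (h : (κ * q) ^ 2 + lam ≤ (κ * r) ^ 2) :
    q ≤ √((κ * r) ^ 2 - lam) / κ ∧ √((κ * r) ^ 2 - lam) / κ ≤ r := by
  constructor
  · rw [le_div_iff₀ hκ, mul_comm, le_sqrt (by positivity) (by linarith [sq_nonneg (κ * q)])]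
    linarith
  · rw [div_le_iff₀ hκ, mul_comm r, sqrt_le_left (by positivity)]
    linarith

lemma lt_sq_and_le_integral_sq_of_gap {ν κ lam c₁ c₂ p q r : ℝ} (hν : 0 < ν) (hκ : 1 / 2 < κ)
    (hlam : 0 < lam) (hc₁ : 0 < c₁) (hc₂ : 0 < c₂) (hp : 0 < p) (hpq : p ≤ q)
    (hJp : besselJ ν p = 0) (hJq : besselJ ν q = 0)
    (hdp : |deriv (besselJ ν) p| ≤ c₂ / √p) (hdq : c₁ / √q ≤ |deriv (besselJ ν) q|)
    (hdr : c₁ / √r ≤ |deriv (besselJ ν) r| ∧ |deriv (besselJ ν) r| ≤ c₂ / √r)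
    (hgap : |r - q - π| ≤ 1 / 2) (hq : lam / κ ^ 2 + 2 * c₂ ^ 2 * p / c₁ ^ 2 + 4 ≤ q) :
    lam < (κ * r) ^ 2 ∧ c₁ ^ 2 / (4 * c₂ ^ 2) ≤ ∫ x in (0 : ℝ)..1,
      (√(2 * κ) * x ^ (κ - 1 / 2) * besselJ ν (√((κ * r) ^ 2 - lam) / κ * x ^ κ)
        / deriv (besselJ ν) r) ^ 2 := by
  have hκ0 : 0 < κ := by linarith
  have hq0 : 0 < q := hp.trans_le hpq
  have hlam₀ : 0 ≤ lam / κ ^ 2 := by positivity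
  have hp₀ : 0 ≤ 2 * c₂ ^ 2 * p / c₁ ^ 2 := by positivity
  have hr : q + 2 ≤ r ∧ r ≤ 2 * q := by
    rw [abs_le] at hgap
    constructor <;> linarith [pi_gt_three, pi_lt_d2]
  have hsq : (κ * q) ^ 2 + lam ≤ (κ * r) ^ 2 := by
    have hlam' : lam ≤ κ ^ 2 * q := by rw [← div_le_iff₀' (by positivity)]; linarith
    have hqr : q ≤ r ^ 2 - q ^ 2 := by nlinarith
    nlinarith [mul_le_mul_of_nonneg_left hqr (sq_nonneg κ)]
  obtain ⟨hqa, har⟩ := le_sqrt_sub_div_and_le hκ0 hlam.le hq0.le (by linarith) hsq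
  set a := √((κ * r) ^ 2 - lam) / κ
  refine ⟨by nlinarith [pow_pos (mul_pos hκ0 hq0) 2],
    le_trans ?_ (energy_sub_div_le_integral_sq hν hκ hp hpq hqa hJp hJq)⟩
  have hnum : c₁ ^ 2 * q / 2 ≤ (q * deriv (besselJ ν) q) ^ 2 - (p * deriv (besselJ ν) p) ^ 2 := by
    have hc₂p : 2 * c₂ ^ 2 * p ≤ c₁ ^ 2 * q := by rw [← div_le_iff₀' (by positivity)]; linarith
    linarith [le_sq_mul_of_div_sqrt_le hc₁.le hq0 hdq, sq_mul_le_of_abs_le_div_sqrt hp hdp]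
  have hden : (a * deriv (besselJ ν) r) ^ 2 ≤ c₂ ^ 2 * (2 * q) :=
    calc (a * deriv (besselJ ν) r) ^ 2 ≤ (r * deriv (besselJ ν) r) ^ 2 := by
          rw [mul_pow, mul_pow]; gcongr
      _ ≤ c₂ ^ 2 * r := sq_mul_le_of_abs_le_div_sqrt (by linarith) hdr.2
      _ ≤ c₂ ^ 2 * (2 * q) := by gcongr; exact hr.2
  have hden₀ : 0 < (a * deriv (besselJ ν) r) ^ 2 := by
    have hd : deriv (besselJ ν) r ≠ 0 :=
      abs_pos.mp ((div_pos hc₁ (sqrt_pos.2 (by linarith))).trans_le hdr.1)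
    have ha : a ≠ 0 := (hq0.trans_le hqa).ne'
    positivity
  calc c₁ ^ 2 / (4 * c₂ ^ 2) = (c₁ ^ 2 * q / 2) / (c₂ ^ 2 * (2 * q)) := by field_simp; ring
    _ ≤ _ := div_le_div₀ ((by positivity : (0 : ℝ) ≤ c₁ ^ 2 * q / 2).trans hnum) hnum hden₀ hden

theorem stmt_18_general (α ν κ : ℝ) (hα : α ∈ Set.Ioo (0:ℝ) 1)
    (hν : ν = (1 - α) / (2 - α)) (hκ : κ = (2 - α) / 2)
    (j : ℕ → ℝ)
    (hjpos : ∀ n, 1 ≤ n → 0 < j n)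
    (hjmono : ∀ m n, 1 ≤ m → m < n → j m < j n)
    (hjzero : ∀ n, 1 ≤ n → besselJ ν (j n) = 0)
    (hjtop : Filter.Tendsto j Filter.atTop Filter.atTop)
    (hasym : ∃ C : ℝ, ∀ n : ℕ, 1 ≤ n →
      |j n - Real.pi * ((n : ℝ) + ν / 2 - 1 / 4)| ≤ C / (n : ℝ))
    (hder : ∃ c₁ > (0:ℝ), ∃ c₂ > (0:ℝ), ∀ n, 1 ≤ n →
      c₁ / Real.sqrt (j n) ≤ |deriv (besselJ ν) (j n)| ∧
      |deriv (besselJ ν) (j n)| ≤ c₂ / Real.sqrt (j n))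
    (ev : ℕ → ℝ) (hev : ∀ n, ev n = (κ * j n) ^ 2)
    (lam : ℝ) (hlam : 0 < lam)
    (ξ : ℕ → ℝ → ℝ)
    (hξ : ∀ n x, ξ n x = Real.sqrt (2 * κ) * x ^ ((1 - α) / 2) *
      besselJ ν ((Real.sqrt (ev n - lam) / κ) * x ^ κ) / deriv (besselJ ν) (j n)) :
    ∃ C > (0:ℝ), ∃ N : ℕ, 1 ≤ N ∧ ∀ n, N ≤ n →
      lam < ev n ∧ C ≤ ∫ x in (0:ℝ)..1, (ξ n x) ^ 2 := by
  obtain ⟨hα0, hα1⟩ := hα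
  have hν0 : 0 < ν := hν ▸ div_pos (by linarith) (by linarith)
  have hκ2 : 1 / 2 < κ := by rw [hκ]; linarith
  have hexp : (1 - α) / 2 = κ - 1 / 2 := by rw [hκ]; ring
  obtain ⟨C, hC⟩ := hasym
  obtain ⟨c₁, hc₁, c₂, hc₂, hder⟩ := hder
  obtain ⟨N, hN⟩ := ((eventually_abs_sub_sub_pi_le (ε := 1 / 2) (by norm_num)
      (by simpa only [add_sub_assoc] using hC)).and
    (hjtop.eventually_ge_atTop (lam / κ ^ 2 + 2 * c₂ ^ 2 * j 1 / c₁ ^ 2 + 4))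
    ).exists_forall_of_atTop
  refine ⟨c₁ ^ 2 / (4 * c₂ ^ 2), by positivity, N + 2, by omega, fun n hn => ?_⟩
  obtain ⟨m, rfl⟩ : ∃ m, n = m + 1 := ⟨n - 1, by omega⟩
  have hm : 1 ≤ m := by omega
  have h1m : j 1 ≤ j m := hm.eq_or_lt.elim (fun h => h ▸ le_rfl) fun h => (hjmono 1 m le_rfl h).le
  simp_rw [hξ, hexp, hev]
  exact lt_sq_and_le_integral_sq_of_gap hν0 hκ2 hlam hc₁ hc₂ (hjpos 1 le_rfl) h1m (hjzero 1 le_rfl)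
    (hjzero m hm) (hder 1 le_rfl).2 (hder m hm).1 (hder (m + 1) (by omega)) (hN m (by omega)).1
    (hN m (by omega)).2

/-- There exist `C > 0` and `N ≥ 1` such that for every `n ≥ N` (in particular `λ_n > λ`),
`∫₀¹ ξ̃_n(x)² dx ≥ C`; the `L²(0,1)` norms of the `ξ̃_n` are bounded below away from zero. -/
theorem stmt_18 (α ν κ : ℝ) (hα : α ∈ Set.Ioo (0:ℝ) 1)
    (hν : ν = (1 - α) / (2 - α)) (hκ : κ = (2 - α) / 2)
    (j : ℕ → ℝ)
    (hjpos : ∀ n, 1 ≤ n → 0 < j n)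
    (hjmono : ∀ m n, 1 ≤ m → m < n → j m < j n)
    (hjzero : ∀ n, 1 ≤ n → besselJ ν (j n) = 0)
    (hjtop : Filter.Tendsto j Filter.atTop Filter.atTop)
    (hasym : ∃ C : ℝ, ∀ n : ℕ, 1 ≤ n →
      |j n - Real.pi * ((n : ℝ) + ν / 2 - 1 / 4)| ≤ C / (n : ℝ))
    (hder : ∃ c₁ > (0:ℝ), ∃ c₂ > (0:ℝ), ∀ n, 1 ≤ n →
      c₁ / Real.sqrt (j n) ≤ |deriv (besselJ ν) (j n)| ∧
      |deriv (besselJ ν) (j n)| ≤ c₂ / Real.sqrt (j n))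
    (ev : ℕ → ℝ) (hev : ∀ n, ev n = (κ * j n) ^ 2)
    (lam : ℝ) (hlam : 0 < lam)
    (hnr1 : ∀ n, 1 ≤ n → lam ≠ ev n)
    (hnr2 : ∀ n k, 1 ≤ n → 1 ≤ k → lam - ev n ≠ ev k)
    (ξ : ℕ → ℝ → ℝ)
    (hξ : ∀ n x, ξ n x = Real.sqrt (2 * κ) * x ^ ((1 - α) / 2) *
      besselJ ν ((Real.sqrt (ev n - lam) / κ) * x ^ κ) / deriv (besselJ ν) (j n)) :
    ∃ C > (0:ℝ), ∃ N : ℕ, 1 ≤ N ∧ ∀ n, N ≤ n →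
      lam < ev n ∧ C ≤ ∫ x in (0:ℝ)..1, (ξ n x) ^ 2 :=
  stmt_18_general α ν κ hα hν hκ j hjpos hjmono hjzero hjtop hasym hder ev hev lam hlam ξ hξ
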